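/- arXiv:2307.14583 — 4 statements merged into one kernel-verified Lean document; each statement's English description precedes it below -/
import Mathlib

section
/- Let κ₁ > 0, κ₂ > 0, χ > 0, γ > 0, ρ₁ > 0 be real numbers, set κ = κ₁ + κ₂, and let the 2×2 matrices of the passive OPO decomposition be A = −(κ/2)·I, B₁ = C₁ = √κ₂·I, B₂ = C₂ = √κ₁·I, D₁ = D₂ = −I, H₁ = χ·I, E₁ = I (so that G = D₁ᵀD₁ = I and Γ = D₂D₂ᵀ = I). Assume κ₂ − κ₁/γ² > 0. Then: (a) there exists ε > 0 such that κ₂ − κ₁/γ² − χ²ερ₁² > 0; and (b) for every ε > 0 satisfying κ₂ − κ₁/γ² − χ²ερ₁² > 0, the Riccati equation (R1) (with ρ = ρ₁) has a stabilising solution X if and only if εγ²((κ₁ − κ₂)² − 4χ²ρ₁²) + 4(γ²κ₂ − κ₁) ≥ 0. -/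
open Matrix Polynomial

noncomputable section

/-- A real square matrix is Hurwitz if every eigenvalue of it, regarded as a complex
matrix (i.e. every complex root of its characteristic polynomial), has negative real part. -/
def IsHurwitz {N : Type*} [Fintype N] [DecidableEq N] (M : Matrix N N ℝ) : Prop :=
  ∀ μ : ℂ, (M.map Complex.ofReal).charpoly.IsRoot μ → μ.re < 0

/-- `X` is a stabilising solution of the Riccati equation (R1). -/
def R1StabSol {n m p q s t : ℕ}
    (A : Matrix (Fin n) (Fin n) ℝ) (B₁ : Matrix (Fin n) (Fin m) ℝ)
    (B₂ : Matrix (Fin n) (Fin p) ℝ) (C₁ : Matrix (Fin q) (Fin n) ℝ)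
    (D₁ : Matrix (Fin q) (Fin m) ℝ) (H₁ : Matrix (Fin n) (Fin s) ℝ)
    (E₁ : Matrix (Fin t) (Fin n) ℝ) (γ ρ ε : ℝ)
    (X : Matrix (Fin n) (Fin n) ℝ) : Prop :=
  let G := D₁ᵀ * D₁
  let Abar := A - B₁ * G⁻¹ * D₁ᵀ * C₁
  let R := B₁ * G⁻¹ * B₁ᵀ - (ε * ρ ^ 2) • (H₁ * H₁ᵀ) - (γ ^ 2)⁻¹ • (B₂ * B₂ᵀ)
  X.IsSymm ∧
  Abarᵀ * X + X * Abar - X * R * X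
    + C₁ᵀ * (1 - D₁ * G⁻¹ * D₁ᵀ) * C₁ + ε⁻¹ • (E₁ᵀ * E₁) = 0 ∧
  IsHurwitz (Abar - R * X)

/-- `Y` is a stabilising solution of the Riccati equation (R2). -/
def R2StabSol {n p q r s t : ℕ}
    (A : Matrix (Fin n) (Fin n) ℝ) (B₂ : Matrix (Fin n) (Fin p) ℝ)
    (C₁ : Matrix (Fin q) (Fin n) ℝ) (C₂ : Matrix (Fin r) (Fin n) ℝ)
    (D₂ : Matrix (Fin r) (Fin p) ℝ) (H₁ : Matrix (Fin n) (Fin s) ℝ)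
    (E₁ : Matrix (Fin t) (Fin n) ℝ) (γ ρ ε : ℝ)
    (Y : Matrix (Fin n) (Fin n) ℝ) : Prop :=
  let Γm := D₂ * D₂ᵀ
  let Ahat := A - B₂ * D₂ᵀ * Γm⁻¹ * C₂
  let S := (γ ^ 2) • (C₂ᵀ * Γm⁻¹ * C₂) - ε⁻¹ • (E₁ᵀ * E₁) - C₁ᵀ * C₁
  Y.IsSymm ∧
  Ahat * Y + Y * Ahatᵀ - Y * S * Y
    + (γ ^ 2)⁻¹ • (B₂ * (1 - D₂ᵀ * Γm⁻¹ * D₂) * B₂ᵀ) + (ε * ρ ^ 2) • (H₁ * H₁ᵀ) = 0 ∧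
  IsHurwitz (Ahat - Y * S)

lemma hurwitz_smul_one' {c : ℝ} (hc : c < 0) :
    IsHurwitz (c • (1 : Matrix (Fin 2) (Fin 2) ℝ)) := by
  intro μ h
  have hmap : (c • (1 : Matrix (Fin 2) (Fin 2) ℝ)).map Complex.ofReal
      = (c : ℂ) • (1 : Matrix (Fin 2) (Fin 2) ℂ) := by
    ext i j
    simp [Matrix.one_apply]
    split <;> simp
  rw [hmap] at h
  have ht : ((c : ℂ) • (1 : Matrix (Fin 2) (Fin 2) ℂ)).BlockTriangular id := by
    intro i j hij
    have hne : i ≠ j := fun e => (ne_of_lt hij) e.symm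
    simp [Matrix.one_apply, hne]
  rw [Matrix.charpoly_of_upperTriangular _ ht] at h
  simp only [Polynomial.IsRoot, Fin.prod_univ_two, Matrix.smul_apply, Matrix.one_apply_eq,
    smul_eq_mul, mul_one, Polynomial.eval_mul, Polynomial.eval_sub, Polynomial.eval_X,
    Polynomial.eval_C, mul_self_eq_zero, mul_eq_zero, sub_eq_zero] at h
  rw [h]; simpa using hc

/-- Proposition 2 (passive case, `κ₂ - κ₁/γ² > 0`): existence of a suitable `ε`, and for
every such `ε` the Riccati equation (R1) has a stabilising solution iff the stated
inequality holds. -/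
theorem stmt2 (κ₁ κ₂ χ γ ρ₁ : ℝ)
    (hκ₁ : 0 < κ₁) (hκ₂ : 0 < κ₂) (hχ : 0 < χ) (hγ : 0 < γ) (hρ₁ : 0 < ρ₁)
    (hmain : 0 < κ₂ - κ₁ / γ ^ 2) :
    (∃ ε : ℝ, 0 < ε ∧ 0 < κ₂ - κ₁ / γ ^ 2 - χ ^ 2 * ε * ρ₁ ^ 2) ∧
    ∀ ε : ℝ, 0 < ε → 0 < κ₂ - κ₁ / γ ^ 2 - χ ^ 2 * ε * ρ₁ ^ 2 →
      ((∃ X : Matrix (Fin 2) (Fin 2) ℝ,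
          R1StabSol (-((κ₁ + κ₂) / 2) • (1 : Matrix (Fin 2) (Fin 2) ℝ))
            (Real.sqrt κ₂ • (1 : Matrix (Fin 2) (Fin 2) ℝ))
            (Real.sqrt κ₁ • (1 : Matrix (Fin 2) (Fin 2) ℝ))
            (Real.sqrt κ₂ • (1 : Matrix (Fin 2) (Fin 2) ℝ))
            (-1 : Matrix (Fin 2) (Fin 2) ℝ)
            (χ • (1 : Matrix (Fin 2) (Fin 2) ℝ))
            (1 : Matrix (Fin 2) (Fin 2) ℝ) γ ρ₁ ε X) ↔
        0 ≤ ε * γ ^ 2 * ((κ₁ - κ₂) ^ 2 - 4 * χ ^ 2 * ρ₁ ^ 2) + 4 * (γ ^ 2 * κ₂ - κ₁)) := by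
  constructor
  · refine ⟨(κ₂ - κ₁ / γ ^ 2) / (2 * χ ^ 2 * ρ₁ ^ 2), by positivity, ?_⟩
    have h2 : χ ^ 2 * ((κ₂ - κ₁ / γ ^ 2) / (2 * χ ^ 2 * ρ₁ ^ 2)) * ρ₁ ^ 2
        = (κ₂ - κ₁ / γ ^ 2) / 2 := by
      field_simp
    rw [h2]
    linarith
  intro ε hε hr
  constructor
  · -- the inequality always holds under the hypotheses
    intro _
    have hγ2 : (0:ℝ) < γ ^ 2 := by positivity
    have hdiv : κ₁ / γ ^ 2 * γ ^ 2 = κ₁ := div_mul_cancel₀ _ (ne_of_gt hγ2)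
    nlinarith [mul_pos hγ2 hr, mul_nonneg (mul_nonneg hε.le hγ2.le) (sq_nonneg (κ₁ - κ₂))]
  · -- construct the stabilising solution
    intro _
    set a : ℝ := (κ₂ - κ₁) / 2 with ha
    set r : ℝ := κ₂ - κ₁ / γ ^ 2 - χ ^ 2 * ε * ρ₁ ^ 2 with hrdef
    have hrpos : 0 < r := hr
    have hdpos : 0 < a ^ 2 + r / ε := by positivity
    set d : ℝ := Real.sqrt (a ^ 2 + r / ε) with hddef
    have hd2 : d ^ 2 = a ^ 2 + r / ε := Real.sq_sqrt hdpos.le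
    have hd : 0 < d := Real.sqrt_pos.mpr hdpos
    set x : ℝ := (a + d) / r with hxdef
    have hsq1 : Real.sqrt κ₁ * Real.sqrt κ₁ = κ₁ := Real.mul_self_sqrt hκ₁.le
    have hsq2 : Real.sqrt κ₂ * Real.sqrt κ₂ = κ₂ := Real.mul_self_sqrt hκ₂.le
    have hεd : ε * d ^ 2 = ε * a ^ 2 + r := by
      rw [hd2]; field_simp
    have hx : a * x + x * a - x * (r * x) + ε⁻¹ = 0 := by
      rw [hxdef]
      field_simp
      linear_combination (-1 : ℝ) * hεd
    have hAbar : ((-((κ₁ + κ₂) / 2) • (1 : Matrix (Fin 2) (Fin 2) ℝ)) -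
        (Real.sqrt κ₂ • (1 : Matrix (Fin 2) (Fin 2) ℝ)) * ((-1 : Matrix (Fin 2) (Fin 2) ℝ)ᵀ *
        (-1 : Matrix (Fin 2) (Fin 2) ℝ))⁻¹ * (-1 : Matrix (Fin 2) (Fin 2) ℝ)ᵀ *
        (Real.sqrt κ₂ • (1 : Matrix (Fin 2) (Fin 2) ℝ))) = a • 1 := by
      simp [Matrix.smul_mul, Matrix.mul_smul, smul_smul, hsq2, ← sub_smul]
      module
    have hR : ((Real.sqrt κ₂ • (1 : Matrix (Fin 2) (Fin 2) ℝ)) *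
          ((-1 : Matrix (Fin 2) (Fin 2) ℝ)ᵀ * (-1 : Matrix (Fin 2) (Fin 2) ℝ))⁻¹ *
          (Real.sqrt κ₂ • (1 : Matrix (Fin 2) (Fin 2) ℝ))ᵀ
        - (ε * ρ₁ ^ 2) • ((χ • (1 : Matrix (Fin 2) (Fin 2) ℝ)) *
            (χ • (1 : Matrix (Fin 2) (Fin 2) ℝ))ᵀ)
        - (γ ^ 2)⁻¹ • ((Real.sqrt κ₁ • (1 : Matrix (Fin 2) (Fin 2) ℝ)) *
            (Real.sqrt κ₁ • (1 : Matrix (Fin 2) (Fin 2) ℝ))ᵀ)) = r • 1 := by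
      simp [Matrix.smul_mul, Matrix.mul_smul, smul_smul, hsq2, hsq1, hrdef]
      match_scalars
      field_simp
      ring
    refine ⟨x • 1, ?_, ?_, ?_⟩
    · simp [Matrix.IsSymm, Matrix.transpose_smul]
    · show (_ : Matrix (Fin 2) (Fin 2) ℝ) = 0
      rw [hAbar, hR]
      simp only [Matrix.transpose_smul, Matrix.transpose_one, Matrix.transpose_neg,
        Matrix.neg_mul, Matrix.mul_neg, neg_neg, Matrix.one_mul, Matrix.mul_one, inv_one,
        Matrix.smul_mul, Matrix.mul_smul, smul_smul, sub_self, Matrix.mul_zero,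
        Matrix.zero_mul, add_zero]
      match_scalars
      linear_combination hx
    · show IsHurwitz _
      rw [hAbar, hR]
      have : (a • (1 : Matrix (Fin 2) (Fin 2) ℝ)) - (r • 1) * (x • 1) = (a - x * r) • 1 := by
        simp [Matrix.smul_mul, Matrix.mul_smul, smul_smul, ← sub_smul]
      rw [this]
      have hrx : x * r = a + d := by
        rw [hxdef, div_mul_cancel₀ _ (ne_of_gt hrpos)]
      apply hurwitz_smul_one'
      rw [hrx]
      linarith
end
end

section
/- Let κ₁ > 0, κ₂ > 0, χ > 0, γ > 0, ρ₂ > 0 be real numbers, set κ = κ₁ + κ₂, and let the 2×2 matrices of the active OPO decomposition be A = diag(−κ/2 + χ, −κ/2 − χ), B₁ = C₁ = √κ₂·I, B₂ = C₂ = √κ₁·I, D₁ = D₂ = −I, H₁ = χ·I, E₁ = I (so that G = D₁ᵀD₁ = I and Γ = D₂D₂ᵀ = I). Assume κ₂ − κ₁/γ² > 0. Then: (a) there exists ε > 0 such that κ₂ − κ₁/γ² − χ²ερ₂² > 0; and (b) for every ε > 0 satisfying κ₂ − κ₁/γ² − χ²ερ₂² > 0, the Riccati equation (R1) (with ρ =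 ρ₂) has a stabilising solution X if and only if both εγ²((κ₁ + κ₂)² − 4χ(κ₁ − κ₂) + 4χ²(1 − ρ₂²)) + 4(γ²κ₂ − κ₁) ≥ 0 and εγ²((κ₁ + κ₂)² + 4χ(κ₁ − κ₂) + 4χ²(1 − ρ₂²)) + 4(γ²κ₂ − κ₁) ≥ 0. -/
/-!
Every datum of the active OPO except the diagonal `A` is a multiple of the identity, so for a
diagonal `X` the equation (R1) splits into the two scalar Riccati equations
`2 b x - r x² + ε⁻¹ = 0` with `b = (κ₂ - κ₁)/2 ± χ` and `r = κ₂ - κ₁/γ² - ε ρ₂² χ²`.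
When `r > 0` each has the stabilising root `x = (b + √(b² + r/ε)) / r`, so a stabilising
solution exists. The two inequalities hold as well, their left-hand sides being
`ε γ² ((κ₁ - κ₂ ∓ 2χ)² + 4 κ₁ κ₂) + 4 γ² r > 0`; hence both sides of the equivalence are true.
-/

open Matrix Polynomial

noncomputable section

theorem isHurwitz_diagonal {N : Type*} [Fintype N] [DecidableEq N] {d : N → ℝ}
    (hd : ∀ i, d i < 0) : IsHurwitz (diagonal d) := by
  intro μ hμ
  rw [diagonal_map Complex.ofReal_zero, charpoly_diagonal, IsRoot, eval_prod,
    Finset.prod_eq_zero_iff] at hμ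
  obtain ⟨i, -, hi⟩ := hμ
  rw [eval_sub, eval_X, eval_C, sub_eq_zero] at hi
  simpa [hi] using hd i

theorem exists_scalar_riccati_stabilizing {b r q : ℝ} (hr : r ≠ 0) (hd : 0 < b ^ 2 + r * q) :
    ∃ x : ℝ, 2 * b * x - r * x ^ 2 + q = 0 ∧ b - r * x < 0 := by
  obtain ⟨s, hs, hs2⟩ : ∃ s : ℝ, 0 < s ∧ s ^ 2 = b ^ 2 + r * q :=
    ⟨√(b ^ 2 + r * q), Real.sqrt_pos.2 hd, Real.sq_sqrt hd.le⟩
  refine ⟨(b + s) / r, ?_, ?_⟩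
  · field_simp
    linear_combination -hs2
  · rw [mul_div_cancel₀ _ hr]
    linarith

theorem r1StabSol_diagonal {n : ℕ} (a x : Fin n → ℝ) (β₁ β₂ c h γ ρ ε : ℝ)
    (hric : ∀ i, 2 * (a i + β₁ * c) * x i
      - (β₁ ^ 2 - ε * ρ ^ 2 * h ^ 2 - β₂ ^ 2 / γ ^ 2) * x i ^ 2 + ε⁻¹ = 0)
    (hstab : ∀ i, a i + β₁ * c - (β₁ ^ 2 - ε * ρ ^ 2 * h ^ 2 - β₂ ^ 2 / γ ^ 2) * x i < 0) :
    R1StabSol (diagonal a) (β₁ • (1 : Matrix (Fin n) (Fin n) ℝ))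
      (β₂ • (1 : Matrix (Fin n) (Fin n) ℝ)) (c • (1 : Matrix (Fin n) (Fin n) ℝ)) (-1)
      (h • (1 : Matrix (Fin n) (Fin n) ℝ)) (1 : Matrix (Fin n) (Fin n) ℝ) γ ρ ε (diagonal x) := by
  have hG : ((-1 : Matrix (Fin n) (Fin n) ℝ)ᵀ * -1)⁻¹ = 1 := by simp
  refine ⟨isSymm_diagonal x, ?_, ?_⟩
  · rw [hG]
    ext i j
    rcases eq_or_ne i j with rfl | hij
    · simp only [diagonal, mul_one, transpose_neg, transpose_one, mul_neg, Algebra.mul_smul_comm,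
        smul_neg, sub_neg_eq_add, transpose_add, transpose_smul, neg_neg, sub_self, mul_zero,
        smul_zero, add_zero, Matrix.add_apply, Matrix.sub_apply, mul_apply, transpose_apply,
        of_apply, Matrix.smul_apply, one_apply, smul_eq_mul, mul_ite, Finset.sum_ite_eq',
        Finset.mem_univ, ↓reduceIte, ite_mul, zero_mul, Finset.sum_ite_eq, Matrix.zero_apply]
      linear_combination hric i
    · simp [diagonal, one_apply, mul_apply, hij, hij.symm]
  · convert isHurwitz_diagonal hstab using 1
    rw [hG]
    ext i j
    rcases eq_or_ne i j with rfl | hij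
    · simp only [diagonal, mul_one, transpose_neg, transpose_one, mul_neg, Algebra.mul_smul_comm,
        smul_neg, sub_neg_eq_add, transpose_smul, Matrix.sub_apply, Matrix.add_apply, of_apply,
        ↓reduceIte, Matrix.smul_apply, one_apply, smul_eq_mul, mul_apply, mul_ite, mul_zero,
        Finset.sum_ite_eq', Finset.mem_univ]
      ring
    · simp [diagonal, one_apply, mul_apply, hij]

theorem active_opo_condition_pos {κ₁ κ₂ σ γ ρ ε : ℝ} (hκ₁ : 0 ≤ κ₁) (hκ₂ : 0 ≤ κ₂) (hε : 0 ≤ ε)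
    (hγ : γ ≠ 0) (h : 0 < κ₂ - κ₁ / γ ^ 2 - σ ^ 2 * ε * ρ ^ 2) :
    0 < ε * γ ^ 2 * ((κ₁ + κ₂) ^ 2 + 4 * σ * (κ₁ - κ₂) + 4 * σ ^ 2 * (1 - ρ ^ 2))
      + 4 * (γ ^ 2 * κ₂ - κ₁) := by
  have key : ε * γ ^ 2 * ((κ₁ + κ₂) ^ 2 + 4 * σ * (κ₁ - κ₂) + 4 * σ ^ 2 * (1 - ρ ^ 2))
      + 4 * (γ ^ 2 * κ₂ - κ₁)
      = ε * γ ^ 2 * ((κ₁ - κ₂ + 2 * σ) ^ 2 + 4 * κ₁ * κ₂)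
        + 4 * γ ^ 2 * (κ₂ - κ₁ / γ ^ 2 - σ ^ 2 * ε * ρ ^ 2) := by
    field_simp
    ring
  rw [key]
  exact add_pos_of_nonneg_of_pos (by positivity) (mul_pos (by positivity) h)

theorem stmt4_general (κ₁ κ₂ χ γ ρ₂ : ℝ)
    (hκ₁ : 0 < κ₁) (hκ₂ : 0 < κ₂) (hγ : 0 < γ)
    (hmain : 0 < κ₂ - κ₁ / γ ^ 2) :
    (∃ ε : ℝ, 0 < ε ∧ 0 < κ₂ - κ₁ / γ ^ 2 - χ ^ 2 * ε * ρ₂ ^ 2) ∧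
    ∀ ε : ℝ, 0 < ε → 0 < κ₂ - κ₁ / γ ^ 2 - χ ^ 2 * ε * ρ₂ ^ 2 →
      ((∃ X : Matrix (Fin 2) (Fin 2) ℝ,
          R1StabSol
            (Matrix.diagonal ![-(κ₁ + κ₂) / 2 + χ, -(κ₁ + κ₂) / 2 - χ])
            (Real.sqrt κ₂ • (1 : Matrix (Fin 2) (Fin 2) ℝ))
            (Real.sqrt κ₁ • (1 : Matrix (Fin 2) (Fin 2) ℝ))
            (Real.sqrt κ₂ • (1 : Matrix (Fin 2) (Fin 2) ℝ))
            (-1 : Matrix (Fin 2) (Fin 2) ℝ)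
            (χ • (1 : Matrix (Fin 2) (Fin 2) ℝ))
            (1 : Matrix (Fin 2) (Fin 2) ℝ) γ ρ₂ ε X) ↔
        (0 ≤ ε * γ ^ 2 * ((κ₁ + κ₂) ^ 2 - 4 * χ * (κ₁ - κ₂) + 4 * χ ^ 2 * (1 - ρ₂ ^ 2))
            + 4 * (γ ^ 2 * κ₂ - κ₁) ∧
         0 ≤ ε * γ ^ 2 * ((κ₁ + κ₂) ^ 2 + 4 * χ * (κ₁ - κ₂) + 4 * χ ^ 2 * (1 - ρ₂ ^ 2))
            + 4 * (γ ^ 2 * κ₂ - κ₁))) := by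
  set δ := κ₂ - κ₁ / γ ^ 2
  refine ⟨⟨δ / (1 + χ ^ 2 * ρ₂ ^ 2), by positivity, ?_⟩, fun ε hε hδε => iff_of_true ?_ ?_⟩
  · have hslack : δ - χ ^ 2 * (δ / (1 + χ ^ 2 * ρ₂ ^ 2)) * ρ₂ ^ 2
        = δ / (1 + χ ^ 2 * ρ₂ ^ 2) := by
      field_simp
      ring
    rw [hslack]
    positivity
  · have hr : 0 < √κ₂ ^ 2 - ε * ρ₂ ^ 2 * χ ^ 2 - √κ₁ ^ 2 / γ ^ 2 := by
      rw [Real.sq_sqrt hκ₁.le, Real.sq_sqrt hκ₂.le]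
      linarith
    choose x hric hstab using fun i => exists_scalar_riccati_stabilizing hr.ne'
      (b := ![-(κ₁ + κ₂) / 2 + χ, -(κ₁ + κ₂) / 2 - χ] i + √κ₂ * √κ₂)
      (add_pos_of_nonneg_of_pos (sq_nonneg _) (mul_pos hr (inv_pos.2 hε)))
    exact ⟨_, r1StabSol_diagonal _ x _ _ _ _ _ _ _ hric hstab⟩
  · refine ⟨?_, (active_opo_condition_pos hκ₁.le hκ₂.le hε.le hγ.ne' hδε).le⟩
    linear_combination
      active_opo_condition_pos hκ₁.le hκ₂.le hε.le hγ.ne' (σ := -χ) (ρ := ρ₂) (by rwa [neg_sq])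

/-- Proposition 3 (active case, `κ₂ - κ₁/γ² > 0`): existence of a suitable `ε`, and for
every such `ε` the Riccati equation (R1) has a stabilising solution iff the two stated
inequalities hold. -/
theorem stmt4 (κ₁ κ₂ χ γ ρ₂ : ℝ)
    (hκ₁ : 0 < κ₁) (hκ₂ : 0 < κ₂) (hχ : 0 < χ) (hγ : 0 < γ) (hρ₂ : 0 < ρ₂)
    (hmain : 0 < κ₂ - κ₁ / γ ^ 2) :
    (∃ ε : ℝ, 0 < ε ∧ 0 < κ₂ - κ₁ / γ ^ 2 - χ ^ 2 * ε * ρ₂ ^ 2) ∧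
    ∀ ε : ℝ, 0 < ε → 0 < κ₂ - κ₁ / γ ^ 2 - χ ^ 2 * ε * ρ₂ ^ 2 →
      ((∃ X : Matrix (Fin 2) (Fin 2) ℝ,
          R1StabSol
            (Matrix.diagonal ![-(κ₁ + κ₂) / 2 + χ, -(κ₁ + κ₂) / 2 - χ])
            (Real.sqrt κ₂ • (1 : Matrix (Fin 2) (Fin 2) ℝ))
            (Real.sqrt κ₁ • (1 : Matrix (Fin 2) (Fin 2) ℝ))
            (Real.sqrt κ₂ • (1 : Matrix (Fin 2) (Fin 2) ℝ))
            (-1 : Matrix (Fin 2) (Fin 2) ℝ)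
            (χ • (1 : Matrix (Fin 2) (Fin 2) ℝ))
            (1 : Matrix (Fin 2) (Fin 2) ℝ) γ ρ₂ ε X) ↔
        (0 ≤ ε * γ ^ 2 * ((κ₁ + κ₂) ^ 2 - 4 * χ * (κ₁ - κ₂) + 4 * χ ^ 2 * (1 - ρ₂ ^ 2))
            + 4 * (γ ^ 2 * κ₂ - κ₁) ∧
         0 ≤ ε * γ ^ 2 * ((κ₁ + κ₂) ^ 2 + 4 * χ * (κ₁ - κ₂) + 4 * χ ^ 2 * (1 - ρ₂ ^ 2))
            + 4 * (γ ^ 2 * κ₂ - κ₁))) :=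
  stmt4_general κ₁ κ₂ χ γ ρ₂ hκ₁ hκ₂ hγ hmain
end
end

section
/- Let κ₁ > 0, κ₂ > 0, χ > 0, γ > 0, ρ₂ > 0 be real numbers, set κ = κ₁ + κ₂, and let the 2×2 matrices of the active OPO decomposition be A = diag(−κ/2 + χ, −κ/2 − χ), B₁ = C₁ = √κ₂·I, B₂ = C₂ = √κ₁·I, D₁ = D₂ = −I, H₁ = χ·I, E₁ = I (so that G = D₁ᵀD₁ = I and Γ = D₂D₂ᵀ = I). Assume κ₂ − κ₁/γ² ≤ 0. Then: (a) if moreover κ₁γ² − κ₂ > 0, there exists ε > 0 such that κ₁γ² − κ₂ − 1/ε > 0; and (b) for every ε > 0 satisfying κ₁γ² − κ₂ − 1/ε > 0, the Riccati equation (R2) (with ρ = ρ₂) has a stabilising solution Y if and only if both 4χ²ρ₂²ε(γ²κ₁ − κ₂) + (κ₁ + κ₂)² − 4χ(κ₁ − κ₂) + 4χ²(1 − ρ₂²) ≥ 0 and 4χ²ρ₂²ε(γ²κ₁ − κ₂) + (κ₁ + κ₂)² + 4χ(κ₁ − κ₂) + 4χ²(1 − ρ₂²) ≥ 0. -/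
open Matrix Polynomial

noncomputable section

lemma hurwitz_diag (a b : ℝ) (ha : a < 0) (hb : b < 0) :
    IsHurwitz (Matrix.diagonal ![a, b]) := by
  intro μ hμ
  have hmap : (Matrix.diagonal ![a,b]).map Complex.ofReal
      = Matrix.diagonal ![(a:ℂ), (b:ℂ)] := by
    ext i j; fin_cases i <;> fin_cases j <;> simp [Matrix.diagonal]
  rw [hmap] at hμ
  simp only [Matrix.charpoly, Matrix.det_fin_two, Polynomial.IsRoot] at hμ
  rw [charmatrix_apply_eq, charmatrix_apply_eq, charmatrix_apply_ne _ _ _ (by decide),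
    charmatrix_apply_ne _ _ _ (by decide)] at hμ
  simp [Matrix.diagonal, sub_eq_zero, mul_eq_zero] at hμ
  rcases hμ with h | h <;> rw [h] <;> simpa using (by assumption : _ < (0:ℝ))

lemma isHurwitz_of_eq {N : Type*} [Fintype N] [DecidableEq N] {M M' : Matrix N N ℝ}
    (h : M = M') (hM' : IsHurwitz M') : IsHurwitz M := h ▸ hM'

lemma riccati_scalar (α d s c : ℝ) (hs : s ≠ 0) (hd : d ^ 2 = α ^ 2 + s * c) :
    α * ((α + d) / s) + (α + d) / s * α - (α + d) / s * s * ((α + d) / s) + c = 0 := by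
  field_simp
  linear_combination -hd

/-- Proposition 3 (active case, `κ₂ - κ₁/γ² ≤ 0`): existence of a suitable `ε` when
`κ₁γ² - κ₂ > 0`, and for every `ε` satisfying the condition, the Riccati equation (R2)
has a stabilising solution iff the two stated inequalities hold. -/
theorem stmt5 (κ₁ κ₂ χ γ ρ₂ : ℝ)
    (hκ₁ : 0 < κ₁) (hκ₂ : 0 < κ₂) (hχ : 0 < χ) (hγ : 0 < γ) (hρ₂ : 0 < ρ₂)
    (hmain : κ₂ - κ₁ / γ ^ 2 ≤ 0) :
    (0 < κ₁ * γ ^ 2 - κ₂ → ∃ ε : ℝ, 0 < ε ∧ 0 < κ₁ * γ ^ 2 - κ₂ - 1 / ε) ∧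
    ∀ ε : ℝ, 0 < ε → 0 < κ₁ * γ ^ 2 - κ₂ - 1 / ε →
      ((∃ Y : Matrix (Fin 2) (Fin 2) ℝ,
          R2StabSol
            (Matrix.diagonal ![-(κ₁ + κ₂) / 2 + χ, -(κ₁ + κ₂) / 2 - χ])
            (Real.sqrt κ₁ • (1 : Matrix (Fin 2) (Fin 2) ℝ))
            (Real.sqrt κ₂ • (1 : Matrix (Fin 2) (Fin 2) ℝ))
            (Real.sqrt κ₁ • (1 : Matrix (Fin 2) (Fin 2) ℝ))
            (-1 : Matrix (Fin 2) (Fin 2) ℝ)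
            (χ • (1 : Matrix (Fin 2) (Fin 2) ℝ))
            (1 : Matrix (Fin 2) (Fin 2) ℝ) γ ρ₂ ε Y) ↔
        (0 ≤ 4 * χ ^ 2 * ρ₂ ^ 2 * ε * (γ ^ 2 * κ₁ - κ₂) + (κ₁ + κ₂) ^ 2
            - 4 * χ * (κ₁ - κ₂) + 4 * χ ^ 2 * (1 - ρ₂ ^ 2) ∧
         0 ≤ 4 * χ ^ 2 * ρ₂ ^ 2 * ε * (γ ^ 2 * κ₁ - κ₂) + (κ₁ + κ₂) ^ 2
            + 4 * χ * (κ₁ - κ₂) + 4 * χ ^ 2 * (1 - ρ₂ ^ 2))) := by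
  have key : ∀ ε : ℝ, 0 < ε → 0 < κ₁ * γ ^ 2 - κ₂ - 1 / ε →
      0 < ε * (κ₁ * γ ^ 2 - κ₂) - 1 := by
    intro ε hε hcond
    have hcc : ε * (1 / ε) = 1 := by field_simp
    nlinarith [mul_pos hε hcond]
  refine ⟨fun h => ⟨2 / (κ₁ * γ ^ 2 - κ₂), by positivity, by
      rw [one_div_div]; linarith⟩, ?_⟩
  intro ε hε hcond
  constructor
  · intro _
    have h2 := key ε hε hcond
    constructor
    · nlinarith [h2, mul_pos hκ₁ hκ₂, sq_nonneg (κ₁ - κ₂ - 2 * χ),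
        mul_nonneg (mul_nonneg (sq_nonneg χ) (sq_nonneg ρ₂)) h2.le]
    · nlinarith [h2, mul_pos hκ₁ hκ₂, sq_nonneg (κ₁ - κ₂ + 2 * χ),
        mul_nonneg (mul_nonneg (sq_nonneg χ) (sq_nonneg ρ₂)) h2.le]
  · intro _
    set s := κ₁ * γ ^ 2 - κ₂ - 1 / ε with hs_def
    have hs : 0 < s := hcond
    set c := ε * ρ₂ ^ 2 * χ ^ 2 with hc_def
    have hc : 0 < c := by positivity
    set α₁ := (κ₁ - κ₂) / 2 + χ with hα₁
    set α₂ := (κ₁ - κ₂) / 2 - χ with hα₂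
    set d₁ := Real.sqrt (α₁ ^ 2 + s * c) with hd₁def
    set d₂ := Real.sqrt (α₂ ^ 2 + s * c) with hd₂def
    have hd₁ : d₁ ^ 2 = α₁ ^ 2 + s * c := Real.sq_sqrt (by positivity)
    have hd₂ : d₂ ^ 2 = α₂ ^ 2 + s * c := Real.sq_sqrt (by positivity)
    have hd₁p : 0 < d₁ := Real.sqrt_pos.mpr (by positivity)
    have hd₂p : 0 < d₂ := Real.sqrt_pos.mpr (by positivity)
    have hk1 : Real.sqrt κ₁ * Real.sqrt κ₁ = κ₁ := Real.mul_self_sqrt hκ₁.le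
    have hk2 : Real.sqrt κ₂ * Real.sqrt κ₂ = κ₂ := Real.mul_self_sqrt hκ₂.le
    have e1 : (-κ₂ + -κ₁) / 2 + χ + Real.sqrt κ₁ * Real.sqrt κ₁ = α₁ := by
      rw [hk1, hα₁]; ring
    have e2 : (-κ₂ + -κ₁) / 2 - χ + Real.sqrt κ₁ * Real.sqrt κ₁ = α₂ := by
      rw [hk1, hα₂]; ring
    have eS : γ ^ 2 * (Real.sqrt κ₁ * Real.sqrt κ₁) - ε⁻¹ - Real.sqrt κ₂ * Real.sqrt κ₂
        = s := by rw [hk1, hk2, hs_def, one_div]; ring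
    have ec : ε * ρ₂ ^ 2 * (χ * χ) = c := by rw [hc_def]; ring
    have hinv : (((-1 : Matrix (Fin 2) (Fin 2) ℝ))
        * ((-1 : Matrix (Fin 2) (Fin 2) ℝ))ᵀ)⁻¹ = 1 := by simp
    refine ⟨Matrix.diagonal ![(α₁ + d₁) / s, (α₂ + d₂) / s],
      Matrix.isSymm_diagonal _, ?_, ?_⟩
    · rw [hinv]
      ext i j
      fin_cases i <;> fin_cases j <;>
        simp [Matrix.mul_apply, Fin.sum_univ_two, Matrix.one_apply, Matrix.diagonal]
      · rw [e1, eS, ec]; exact riccati_scalar α₁ d₁ s c hs.ne' hd₁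
      · rw [e2, eS, ec]; exact riccati_scalar α₂ d₂ s c hs.ne' hd₂
    · rw [hinv]
      refine isHurwitz_of_eq ?_
        (hurwitz_diag (-d₁) (-d₂) (by linarith) (by linarith))
      ext i j
      fin_cases i <;> fin_cases j <;>
        simp [Matrix.mul_apply, Fin.sum_univ_two, Matrix.one_apply, Matrix.diagonal]
      · rw [e1, eS]; field_simp; ring
      · rw [e2, eS]; field_simp; ring
end
end

section
/- Let β_b ≥ 0 and let δ, φ be real numbers with 0 ≤ δ ≤ β_b. Then the 2×2 real matrix F = F₂(φ) + δ·F₁(φ), where F₁(φ) = [[cos φ, sin φ],[sin φ, −cos φ]] and F₂(φ) = [[−1 + cos φ, sin φ],[sin φ, 1 − cos φ]], satisfies FᵀF = ((1 + δ)² + 1 − 2(1 + δ)cos φ)·I₂ ≤ (2 + δ)²·I₂ ≤ (2 + β_b)²·I₂. In particular, the active-decomposition uncertainty of an OPO with both phase fluctuation Δφ(t) = φ and relative amplitude fluctuation Δβ(t)/β = δ ∈ [0, β_b] satisfies the norm bound FᵀF ≤ ρ₂²·I₂ with ρ₂ = 2 + β_b. -/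
open Matrix

noncomputable section

/-- The uncertainty matrix of the passive decomposition for phase fluctuation `φ`. -/
def F₁ (φ : ℝ) : Matrix (Fin 2) (Fin 2) ℝ :=
  !![Real.cos φ, Real.sin φ; Real.sin φ, -Real.cos φ]

/-- The uncertainty matrix of the active decomposition for phase fluctuation `φ`. -/
def F₂ (φ : ℝ) : Matrix (Fin 2) (Fin 2) ℝ :=
  !![-1 + Real.cos φ, Real.sin φ; Real.sin φ, 1 - Real.cos φ]

lemma smul_one_psd (c : ℝ) (hc : 0 ≤ c) :
    (c • (1 : Matrix (Fin 2) (Fin 2) ℝ)).PosSemidef := by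
  have h : c • (1 : Matrix (Fin 2) (Fin 2) ℝ) = Matrix.diagonal (fun _ => c) := by
    ext i j
    by_cases hij : i = j <;>
      simp [Matrix.one_apply, Matrix.diagonal, hij]
  rw [h]
  exact Matrix.PosSemidef.diagonal fun _ => hc

/-- For `0 ≤ δ ≤ β_b`, the matrix `F = F₂(φ) + δ F₁(φ)` satisfies
`FᵀF = ((1+δ)² + 1 - 2(1+δ)cos φ) I ≤ (2+δ)² I ≤ (2+β_b)² I`: the active-decomposition
uncertainty with both phase and amplitude fluctuations obeys the norm bound with
`ρ₂ = 2 + β_b`. -/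
theorem stmt8 (βb δ φ : ℝ) (hβb : 0 ≤ βb) (hδ0 : 0 ≤ δ) (hδ : δ ≤ βb) :
    (F₂ φ + δ • F₁ φ)ᵀ * (F₂ φ + δ • F₁ φ)
      = ((1 + δ) ^ 2 + 1 - 2 * (1 + δ) * Real.cos φ) • (1 : Matrix (Fin 2) (Fin 2) ℝ) ∧
    (((2 + δ) ^ 2) • (1 : Matrix (Fin 2) (Fin 2) ℝ)
      - (F₂ φ + δ • F₁ φ)ᵀ * (F₂ φ + δ • F₁ φ)).PosSemidef ∧
    (((2 + βb) ^ 2) • (1 : Matrix (Fin 2) (Fin 2) ℝ)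
      - ((2 + δ) ^ 2) • (1 : Matrix (Fin 2) (Fin 2) ℝ)).PosSemidef ∧
    (((2 + βb) ^ 2) • (1 : Matrix (Fin 2) (Fin 2) ℝ)
      - (F₂ φ + δ • F₁ φ)ᵀ * (F₂ φ + δ • F₁ φ)).PosSemidef := by
  have pyth := Real.sin_sq_add_cos_sq φ
  have hsym : (F₂ φ + δ • F₁ φ)ᵀ = F₂ φ + δ • F₁ φ := by
    ext i j
    fin_cases i <;> fin_cases j <;> simp [F₁, F₂]
  have heq : (F₂ φ + δ • F₁ φ)ᵀ * (F₂ φ + δ • F₁ φ)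
      = ((1 + δ) ^ 2 + 1 - 2 * (1 + δ) * Real.cos φ) • (1 : Matrix (Fin 2) (Fin 2) ℝ) := by
    rw [hsym]
    ext i j
    fin_cases i <;> fin_cases j <;>
      simp [F₁, F₂, Matrix.mul_apply, Fin.sum_univ_two, Matrix.one_apply, Matrix.transpose_apply] <;> nlinarith [pyth]
  refine ⟨heq, ?_, ?_, ?_⟩
  · rw [heq, ← sub_smul]
    apply smul_one_psd
    nlinarith [Real.neg_one_le_cos φ]
  · rw [← sub_smul]
    apply smul_one_psd
    nlinarith
  · rw [heq, ← sub_smul]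
    apply smul_one_psd
    nlinarith [Real.neg_one_le_cos φ]
end
end
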